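/- Let U be a unitary n×n matrix, W₁,…,Wₖ unitary n×n matrices, q a probability distribution, W̄ = Σₐ q(a)Wₐ, δ = Σₐ q(a)‖Wₐ − W̄‖². Then for any σ with trace norm at most 1, ‖U σ U† − Σₐ q(a) Wₐ σ Wₐ†‖₁ ≤ δ + 2‖W̄ − U‖. -/

import Mathlib

open scoped Matrix.Norms.L2Operator ComplexOrder Kronecker
open Matrix Complex

/-- The positive semidefinite square root of a positive semidefinite matrix
(removed from Mathlib; restored here with its old definition). -/
noncomputable def Matrix.PosSemidef.sqrt {n : Type*} [Fintype n] [DecidableEq n] {𝕜 : Type*}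
    [RCLike 𝕜] {A : Matrix n n 𝕜} (hA : Matrix.PosSemidef A) : Matrix n n 𝕜 :=
  hA.1.eigenvectorUnitary.1 * diagonal ((↑) ∘ Real.sqrt ∘ hA.1.eigenvalues) *
  (star hA.1.eigenvectorUnitary : Matrix n n 𝕜)

/-- The trace norm (sum of singular values) of a square complex matrix. -/
noncomputable def traceNorm {n : Type*} [Fintype n] [DecidableEq n] (A : Matrix n n ℂ) : ℝ :=
  ((Matrix.posSemidef_conjTranspose_mul_self A).sqrt.trace).re

/-
The trace norm is dual to the operator norm: the polar decomposition `A = V |A|`, with `‖V‖ ≤ 1`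
and `Vᴴ A = |A|`, gives `‖A‖₁ = max {Re tr (B A) | ‖B‖ ≤ 1}`. Hence `‖·‖₁` is subadditive and
`‖X A Y‖₁ ≤ ‖X‖ ‖A‖₁ ‖Y‖`. Since `Σₐ q(a) (Wₐ - W̄) σ (Wₐ - W̄)ᴴ = Σₐ q(a) Wₐ σ Wₐᴴ - W̄ σ W̄ᴴ`,
  `U σ Uᴴ - Σₐ q(a) Wₐ σ Wₐᴴ = (U - W̄) σ Uᴴ + W̄ σ (U - W̄)ᴴ - Σₐ q(a) (Wₐ - W̄) σ (Wₐ - W̄)ᴴ`,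
and the three terms have trace norm at most `‖W̄ - U‖`, `‖W̄ - U‖` (as `‖W̄‖ ≤ 1`) and `δ`.
-/

theorem norm_le_one_of_isStarProjection_star_mul_self {E : Type*} [NonUnitalNormedRing E]
    [StarRing E] [CStarRing E] {x : E} (hx : IsStarProjection (star x * x)) : ‖x‖ ≤ 1 := by
  have h := hx.norm_le
  rw [CStarRing.norm_star_mul_self] at h
  nlinarith [norm_nonneg x]

theorem norm_le_one_of_mem_unitary {E : Type*} [NormedRing E] [StarRing E] [CStarRing E] {U : E}
    (hU : U ∈ unitary E) : ‖U‖ ≤ 1 :=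
  norm_le_one_of_isStarProjection_star_mul_self <| by
    rw [Unitary.star_mul_self_of_mem hU]
    exact .one _

namespace Matrix

variable {n 𝕜 : Type*} [Fintype n] [DecidableEq n] [RCLike 𝕜]

theorem norm_apply_le_l2_opNorm {m : Type*} [Fintype m] (M : Matrix m n 𝕜) (i : m) (j : n) :
    ‖M i j‖ ≤ ‖M‖ := by
  have h := l2_opNorm_mulVec M (EuclideanSpace.single j 1)
  rw [PiLp.norm_single, norm_one, mul_one] at h
  refine le_trans (le_of_eq ?_) ((PiLp.norm_apply_le _ i).trans h)
  simp [mulVec_single]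

theorem isStarProjection_diagonal {d : n → 𝕜} (hmul : d * d = d) (hstar : star d = d) :
    IsStarProjection (diagonal d) :=
  isStarProjection_iff'.2
    ⟨by rw [diagonal_mul_diagonal]; exact congrArg diagonal hmul,
     by rw [star_eq_conjTranspose, diagonal_conjTranspose, hstar]⟩

theorem mul_diagonal_inv_mul_diagonal_of_conjTranspose_mul_self {m : Type*} [Fintype m]
    {C : Matrix m n 𝕜} {d : n → 𝕜} (hC : Cᴴ * C = diagonal d * diagonal d) :
    C * (diagonal d⁻¹ * diagonal d) = C := by
  -- `Cᴴ C = diag (d²)` forces the columns of `C` where `d` vanishes to be zero.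
  have h0 : C * (1 - diagonal d⁻¹ * diagonal d) = 0 := by
    refine (conjTranspose_mul_self_mul_eq_zero C _).1 ?_
    rw [hC, mul_sub, mul_one, sub_eq_zero]
    simp only [diagonal_mul_diagonal]
    congr 1
    funext i
    by_cases h : d i = 0 <;> simp [h]
  rwa [Matrix.mul_sub, Matrix.mul_one, sub_eq_zero, eq_comm] at h0

theorem l2_opNorm_mul_diagonal_inv_le_one {C : Matrix n n 𝕜} {d : n → 𝕜}
    (hC : Cᴴ * C = diagonal d * diagonal d) (hd : ∀ i, (starRingEnd 𝕜) (d i) = d i) :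
    ‖C * diagonal d⁻¹‖ ≤ 1 := by
  refine norm_le_one_of_isStarProjection_star_mul_self ?_
  rw [star_eq_conjTranspose, conjTranspose_mul, diagonal_conjTranspose, mul_assoc, ← mul_assoc Cᴴ,
    hC]
  simp only [diagonal_mul_diagonal]
  refine isStarProjection_diagonal ?_ ?_
  · funext i; by_cases h : d i = 0 <;> simp [h, hd]
  · funext i; by_cases h : d i = 0 <;> simp [h, hd]

theorem exists_polar_decomposition (A : Matrix n n 𝕜) :
    ∃ V : Matrix n n 𝕜, ‖V‖ ≤ 1 ∧ V * (posSemidef_conjTranspose_mul_self A).sqrt = A ∧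
      Vᴴ * A = (posSemidef_conjTranspose_mul_self A).sqrt := by
  set hH := posSemidef_conjTranspose_mul_self A
  set u := hH.1.eigenvectorUnitary
  set d : n → 𝕜 := (↑) ∘ Real.sqrt ∘ hH.1.eigenvalues
  set U : Matrix n n 𝕜 := u.1
  have hS : hH.sqrt = U * diagonal d * star U := rfl
  have hd : ∀ i, (starRingEnd 𝕜) (d i) = d i := fun i => RCLike.conj_ofReal _
  set C := A * U
  have hUU : star U * U = 1 := Unitary.coe_star_mul_self u
  have hUU' : U * star U = 1 := Unitary.coe_mul_star_self u
  have hA : C * star U = A := by rw [mul_assoc, hUU', mul_one]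
  have hCC : Cᴴ * C = diagonal d * diagonal d := by
    have h := hH.1.conjStarAlgAut_star_eigenvectorUnitary
    rw [Unitary.conjStarAlgAut_star_apply] at h
    rw [conjTranspose_mul, ← star_eq_conjTranspose, mul_assoc, ← mul_assoc Aᴴ, ← mul_assoc, h,
      diagonal_mul_diagonal]
    congr 1
    funext i
    simp [d, ← RCLike.ofReal_mul, Real.mul_self_sqrt (hH.eigenvalues_nonneg i)]
  -- `0⁻¹ = 0` makes `diagonal d⁻¹` the pseudo-inverse of `diagonal d`.
  refine ⟨C * diagonal d⁻¹ * star U, ?_, ?_, ?_⟩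
  · rw [CStarRing.norm_mul_mem_unitary _ (Unitary.star_mem u.2)]
    exact l2_opNorm_mul_diagonal_inv_le_one hCC hd
  · simp only [hS, mul_assoc]
    rw [← mul_assoc (star U) U, hUU, one_mul, ← mul_assoc (diagonal d⁻¹),
      ← mul_assoc C, mul_diagonal_inv_mul_diagonal_of_conjTranspose_mul_self hCC, hA]
  · rw [hS]
    nth_rw 1 [← hA]
    rw [conjTranspose_mul, conjTranspose_mul, ← star_eq_conjTranspose (star U), star_star,
      diagonal_conjTranspose]
    simp only [mul_assoc]
    rw [← mul_assoc Cᴴ C, hCC, ← mul_assoc (diagonal _)]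
    simp only [diagonal_mul_diagonal]
    congr 3
    funext i
    by_cases h : d i = 0 <;> simp [h, hd]

namespace PosSemidef

theorem trace_sqrt {S : Matrix n n 𝕜} (hS : S.PosSemidef) :
    hS.sqrt.trace = ∑ i, (√(hS.1.eigenvalues i) : 𝕜) := by
  rw [PosSemidef.sqrt, trace_mul_cycle, Unitary.coe_star_mul_self, one_mul, trace_diagonal]
  rfl

theorem re_trace_mul_sqrt_le {S : Matrix n n 𝕜} (hS : S.PosSemidef) (M : Matrix n n 𝕜) :
    RCLike.re (M * hS.sqrt).trace ≤ ‖M‖ * RCLike.re hS.sqrt.trace := by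
  set u := hS.1.eigenvectorUnitary
  set N : Matrix n n 𝕜 := ((star u : unitaryGroup n 𝕜) : Matrix n n 𝕜) * M * u
  have hN : ‖N‖ = ‖M‖ := by
    simp only [N, CStarRing.norm_coe_unitary_mul, CStarRing.norm_mul_coe_unitary]
  have htrace : (M * hS.sqrt).trace = ∑ i, N i i * (√(hS.1.eigenvalues i) : 𝕜) := by
    rw [PosSemidef.sqrt, ← mul_assoc, trace_mul_comm, ← mul_assoc, ← mul_assoc]
    simp [trace, mul_diagonal, N, u]
  rw [htrace, hS.trace_sqrt, map_sum, map_sum, Finset.mul_sum]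
  refine Finset.sum_le_sum fun i _ => ?_
  rw [RCLike.re_mul_ofReal, RCLike.ofReal_re, ← hN]
  exact mul_le_mul_of_nonneg_right ((RCLike.re_le_norm _).trans (norm_apply_le_l2_opNorm N i i))
    (Real.sqrt_nonneg _)

end PosSemidef

end Matrix

section TraceNorm

variable {n : Type*} [Fintype n] [DecidableEq n]

theorem traceNorm_nonneg (A : Matrix n n ℂ) : 0 ≤ traceNorm A := by
  rw [traceNorm, PosSemidef.trace_sqrt, Complex.re_sum]
  exact Finset.sum_nonneg fun i _ => by simp

theorem re_trace_mul_le (B A : Matrix n n ℂ) : (B * A).trace.re ≤ ‖B‖ * traceNorm A := by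
  obtain ⟨V, hV, hVS, -⟩ := exists_polar_decomposition A
  calc (B * A).trace.re = ((B * V) * (posSemidef_conjTranspose_mul_self A).sqrt).trace.re := by
        rw [mul_assoc, hVS]
    _ ≤ ‖B * V‖ * traceNorm A := (posSemidef_conjTranspose_mul_self A).re_trace_mul_sqrt_le _
    _ ≤ ‖B‖ * traceNorm A := by
        gcongr
        · exact traceNorm_nonneg A
        · exact (norm_mul_le _ _).trans (mul_le_of_le_one_right (norm_nonneg B) hV)

theorem traceNorm_le_of_forall_re_trace_mul_le {A : Matrix n n ℂ} {r : ℝ}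
    (h : ∀ B : Matrix n n ℂ, ‖B‖ ≤ 1 → (B * A).trace.re ≤ r) : traceNorm A ≤ r := by
  obtain ⟨V, hV, -, hVA⟩ := exists_polar_decomposition A
  calc traceNorm A = (Vᴴ * A).trace.re := by rw [hVA]; rfl
    _ ≤ r := h _ (by rwa [l2_opNorm_conjTranspose])

theorem traceNorm_add_le (A B : Matrix n n ℂ) : traceNorm (A + B) ≤ traceNorm A + traceNorm B := by
  refine traceNorm_le_of_forall_re_trace_mul_le fun C hC => ?_
  rw [mul_add, trace_add, Complex.add_re]
  gcongr <;> exact (re_trace_mul_le _ _).trans (mul_le_of_le_one_left (traceNorm_nonneg _) hC)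

theorem traceNorm_sub_le (A B : Matrix n n ℂ) : traceNorm (A - B) ≤ traceNorm A + traceNorm B := by
  refine traceNorm_le_of_forall_re_trace_mul_le fun C hC => ?_
  rw [mul_sub, sub_eq_add_neg, ← neg_mul, trace_add, Complex.add_re]
  gcongr <;> refine (re_trace_mul_le _ _).trans (mul_le_of_le_one_left (traceNorm_nonneg _) ?_)
  · exact hC
  · rwa [norm_neg]

theorem traceNorm_smul_le (c : ℂ) (A : Matrix n n ℂ) : traceNorm (c • A) ≤ ‖c‖ * traceNorm A := by
  refine traceNorm_le_of_forall_re_trace_mul_le fun B hB => ?_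
  rw [mul_smul_comm, ← smul_mul_assoc]
  refine (re_trace_mul_le _ _).trans ?_
  gcongr
  · exact traceNorm_nonneg A
  · exact (norm_smul_le c B).trans (mul_le_of_le_one_right (norm_nonneg c) hB)

theorem traceNorm_sum_le {ι : Type*} (s : Finset ι) (A : ι → Matrix n n ℂ) :
    traceNorm (∑ i ∈ s, A i) ≤ ∑ i ∈ s, traceNorm (A i) := by
  refine traceNorm_le_of_forall_re_trace_mul_le fun B hB => ?_
  rw [Finset.mul_sum, trace_sum, Complex.re_sum]
  exact Finset.sum_le_sum fun i _ =>
    (re_trace_mul_le _ _).trans (mul_le_of_le_one_left (traceNorm_nonneg _) hB)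

theorem traceNorm_mul_mul_le (X A Y : Matrix n n ℂ) :
    traceNorm (X * A * Y) ≤ ‖X‖ * traceNorm A * ‖Y‖ := by
  refine traceNorm_le_of_forall_re_trace_mul_le fun B hB => ?_
  have hYBX : ‖Y * B * X‖ ≤ ‖Y‖ * ‖X‖ :=
    calc ‖Y * B * X‖ ≤ ‖Y‖ * ‖B‖ * ‖X‖ := norm_mul₃_le
      _ ≤ ‖Y‖ * 1 * ‖X‖ := by gcongr
      _ = ‖Y‖ * ‖X‖ := by rw [mul_one]
  calc (B * (X * A * Y)).trace.re = (Y * B * X * A).trace.re := by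
        rw [show Y * B * X * A = Y * (B * X * A) by simp only [mul_assoc], trace_mul_comm Y]
        simp only [mul_assoc]
    _ ≤ ‖Y * B * X‖ * traceNorm A := re_trace_mul_le _ _
    _ ≤ ‖Y‖ * ‖X‖ * traceNorm A := by gcongr; exact traceNorm_nonneg A
    _ = ‖X‖ * traceNorm A * ‖Y‖ := by ring

theorem traceNorm_mul_mul_le_of_traceNorm_le_one {A : Matrix n n ℂ} (hA : traceNorm A ≤ 1)
    (X Y : Matrix n n ℂ) : traceNorm (X * A * Y) ≤ ‖X‖ * ‖Y‖ :=
  calc traceNorm (X * A * Y) ≤ ‖X‖ * traceNorm A * ‖Y‖ := traceNorm_mul_mul_le X A Y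
    _ ≤ ‖X‖ * 1 * ‖Y‖ := by gcongr
    _ = ‖X‖ * ‖Y‖ := by rw [mul_one]

theorem traceNorm_sum_smul_mul_mul_conjTranspose_le {ι : Type*} (s : Finset ι) {q : ι → ℝ}
    (hq : ∀ a ∈ s, 0 ≤ q a) (X : ι → Matrix n n ℂ) {A : Matrix n n ℂ} (hA : traceNorm A ≤ 1) :
    traceNorm (∑ a ∈ s, (q a : ℂ) • (X a * A * (X a)ᴴ)) ≤ ∑ a ∈ s, q a * ‖X a‖ ^ 2 := by
  refine (traceNorm_sum_le _ _).trans (Finset.sum_le_sum fun a ha => ?_)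
  calc _ ≤ ‖(q a : ℂ)‖ * traceNorm (X a * A * (X a)ᴴ) := traceNorm_smul_le _ _
    _ ≤ q a * (‖X a‖ * ‖(X a)ᴴ‖) := by
      rw [Complex.norm_real, Real.norm_of_nonneg (hq a ha)]
      exact mul_le_mul_of_nonneg_left (traceNorm_mul_mul_le_of_traceNorm_le_one hA _ _) (hq a ha)
    _ = q a * ‖X a‖ ^ 2 := by rw [l2_opNorm_conjTranspose, sq]

end TraceNorm

theorem sum_smul_sub_mul_mul_conjTranspose_sub {n ι : Type*} [Fintype n] (s : Finset ι)
    (q : ι → ℝ) (hq : ∑ a ∈ s, q a = 1) (W : ι → Matrix n n ℂ) (Wbar : Matrix n n ℂ)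
    (hWbar : Wbar = ∑ a ∈ s, (q a : ℂ) • W a) (X : Matrix n n ℂ) :
    ∑ a ∈ s, (q a : ℂ) • ((W a - Wbar) * X * (W a - Wbar)ᴴ) =
      ∑ a ∈ s, (q a : ℂ) • (W a * X * (W a)ᴴ) - Wbar * X * Wbarᴴ := by
  have hWbarH : Wbarᴴ = ∑ a ∈ s, (q a : ℂ) • (W a)ᴴ := by
    simp [hWbar, conjTranspose_sum, conjTranspose_smul]
  have h1 : ∑ a ∈ s, (q a : ℂ) • (W a * X * Wbarᴴ) = Wbar * X * Wbarᴴ := by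
    simp only [← smul_mul_assoc, ← Finset.sum_mul, ← hWbar]
  have h2 : ∑ a ∈ s, (q a : ℂ) • (Wbar * X * (W a)ᴴ) = Wbar * X * Wbarᴴ := by
    simp only [← mul_smul_comm, ← Finset.mul_sum, ← hWbarH]
  have h3 : ∑ a ∈ s, (q a : ℂ) • (Wbar * X * Wbarᴴ) = Wbar * X * Wbarᴴ := by
    rw [← Finset.sum_smul, ← Complex.ofReal_sum, hq, Complex.ofReal_one, one_smul]
  simp only [conjTranspose_sub, sub_mul, mul_sub, smul_sub, Finset.sum_sub_distrib, h1, h2, h3]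
  abel

theorem stmt_3 {n k : ℕ} (U : Matrix (Fin n) (Fin n) ℂ)
    (hU : U ∈ Matrix.unitaryGroup (Fin n) ℂ)
    (W : Fin k → Matrix (Fin n) (Fin n) ℂ)
    (hW : ∀ a, W a ∈ Matrix.unitaryGroup (Fin n) ℂ)
    (q : Fin k → ℝ) (hq0 : ∀ a, 0 ≤ q a) (hq1 : ∑ a, q a = 1)
    (Wbar : Matrix (Fin n) (Fin n) ℂ) (hWbar : Wbar = ∑ a, (q a : ℂ) • W a)
    (δ : ℝ) (hδ : δ = ∑ a, q a * ‖W a - Wbar‖ ^ 2)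
    (σ : Matrix (Fin n) (Fin n) ℂ) (hσ : traceNorm σ ≤ 1) :
    traceNorm (U * σ * Uᴴ - ∑ a, (q a : ℂ) • (W a * σ * (W a)ᴴ)) ≤ δ + 2 * ‖Wbar - U‖ := by
  have hWbar_norm : ‖Wbar‖ ≤ 1 := by
    rw [hWbar]
    simp only [Complex.coe_smul]
    exact mem_closedBall_zero_iff.1 <| (convex_closedBall 0 1).sum_mem (fun a _ => hq0 a) hq1
      fun a _ => mem_closedBall_zero_iff.2 (norm_le_one_of_mem_unitary (hW a))
  have hdecomp : U * σ * Uᴴ - ∑ a, (q a : ℂ) • (W a * σ * (W a)ᴴ) =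
      (U - Wbar) * σ * Uᴴ + Wbar * σ * (U - Wbar)ᴴ -
        ∑ a, (q a : ℂ) • ((W a - Wbar) * σ * (W a - Wbar)ᴴ) := by
    rw [sum_smul_sub_mul_mul_conjTranspose_sub _ q hq1 W Wbar hWbar]
    simp only [conjTranspose_sub, sub_mul, mul_sub]
    abel
  rw [hdecomp, hδ]
  calc _ ≤ traceNorm ((U - Wbar) * σ * Uᴴ) + traceNorm (Wbar * σ * (U - Wbar)ᴴ) +
        traceNorm (∑ a, (q a : ℂ) • ((W a - Wbar) * σ * (W a - Wbar)ᴴ)) :=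
        (traceNorm_sub_le _ _).trans (by gcongr; exact traceNorm_add_le _ _)
    _ ≤ ‖U - Wbar‖ * ‖Uᴴ‖ + ‖Wbar‖ * ‖(U - Wbar)ᴴ‖ + ∑ a, q a * ‖W a - Wbar‖ ^ 2 := by
        gcongr
        · exact traceNorm_mul_mul_le_of_traceNorm_le_one hσ _ _
        · exact traceNorm_mul_mul_le_of_traceNorm_le_one hσ _ _
        · exact traceNorm_sum_smul_mul_mul_conjTranspose_le _ (fun a _ => hq0 a) _ hσ
    _ ≤ ∑ a, q a * ‖W a - Wbar‖ ^ 2 + 2 * ‖Wbar - U‖ := by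
      rw [l2_opNorm_conjTranspose, l2_opNorm_conjTranspose, norm_sub_rev U]
      nlinarith [norm_le_one_of_mem_unitary hU, norm_nonneg (Wbar - U)]
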